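/- arXiv:2301.07852 — 2 statements merged into one kernel-verified Lean document; each statement's English description precedes it below -/
import Mathlib

section
/- Let κ > 0. The fundamental solution G_κ : ℝ³ \ {0} → ℂ of the biharmonic operator, defined by G_κ(x) = (e^{iκ|x|} − e^{−κ|x|})/(8πκ²|x|), is smooth on ℝ³ \ {0} and satisfies the homogeneous plate equation Δ(ΔG_κ)(x) = κ⁴ G_κ(x) for every x ≠ 0. -/
set_option maxHeartbeats 1000000
open Real Complex Filter Topology


noncomputable section

/-- ℝ³ with the Euclidean norm. -/
abbrev R3 := EuclideanSpace ℝ (Fin 3)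

/-- The Laplacian `Δf = ∑ᵢ ∂²f/∂xᵢ²` on ℝ³. -/
def lap {E : Type*} [NormedAddCommGroup E] [NormedSpace ℝ E] (f : R3 → E) (x : R3) : E :=
  ∑ i : Fin 3, iteratedFDeriv ℝ 2 f x ![EuclideanSpace.single i 1, EuclideanSpace.single i 1]

lemma lap_congr {f g : R3 → ℂ} {x : R3} (h : f =ᶠ[𝓝 x] g) : lap f x = lap g x := by
  unfold lap
  refine Finset.sum_congr rfl fun i _ => ?_
  rw [iteratedFDeriv_two_apply, iteratedFDeriv_two_apply, (h.fderiv (𝕜 := ℝ)).fderiv_eq]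

lemma radial_hasFDerivAt (ψ dψ : ℝ → ℂ)
    (h1 : ∀ t, 0 < t → HasDerivAt ψ (dψ t) t) {y : R3} (hy : y ≠ 0) :
    HasFDerivAt (fun z : R3 => ψ (‖z‖^2)) ((2 • (innerSL ℝ y)).smulRight (dψ (‖y‖^2))) y := by
  have hpos : (0:ℝ) < ‖y‖^2 := by
    have := norm_pos_iff.mpr hy; positivity
  have hu : HasFDerivAt (fun z : R3 => ‖z‖^2) (2 • (innerSL ℝ y)) y :=
    (hasStrictFDerivAt_norm_sq y).hasFDerivAt
  have h := (h1 _ hpos).hasFDerivAt.comp y hu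
  exact h.congr_fderiv (by ext v; simp [ContinuousLinearMap.toSpanSingleton_apply]; ring)

lemma lap_radial (ψ dψ d2ψ : ℝ → ℂ)
    (h1 : ∀ t, 0 < t → HasDerivAt ψ (dψ t) t)
    (h2 : ∀ t, 0 < t → HasDerivAt dψ (d2ψ t) t)
    {x : R3} (hx : x ≠ 0) :
    lap (fun y : R3 => ψ (‖y‖^2)) x
      = 6 * dψ (‖x‖^2) + 4 * ((‖x‖^2 : ℝ) : ℂ) * d2ψ (‖x‖^2) := by
  have hpos : (0:ℝ) < ‖x‖^2 := by
    have := norm_pos_iff.mpr hx; positivity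
  set D : R3 → (R3 →L[ℝ] ℂ) := fun y => (2 • (innerSL ℝ y)).smulRight (dψ (‖y‖^2)) with hD
  have hDev : fderiv ℝ (fun y : R3 => ψ (‖y‖^2)) =ᶠ[𝓝 x] D := by
    filter_upwards [isOpen_compl_singleton.mem_nhds (by simpa using hx)] with y hy
    exact (radial_hasFDerivAt ψ dψ h1 hy).fderiv
  set T : R3 →L[ℝ] ℂ →L[ℝ] (R3 →L[ℝ] ℂ) :=
      (ContinuousLinearMap.smulRightL ℝ R3 ℂ).comp (2 • (innerSL ℝ)) with hT
  have hc : HasFDerivAt T T x := by apply ContinuousLinearMap.hasFDerivAt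
  have hu : HasFDerivAt (fun y : R3 => dψ (‖y‖^2))
      ((2 • (innerSL ℝ x)).smulRight (d2ψ (‖x‖^2))) x :=
    radial_hasFDerivAt dψ d2ψ h2 hx
  have hDdev : HasFDerivAt D
      ((T x).comp ((2 • (innerSL ℝ x)).smulRight (d2ψ (‖x‖^2))) + T.flip (dψ (‖x‖^2))) x := by
    exact hc.clm_apply hu
  have hsecond : fderiv ℝ (fderiv ℝ (fun y : R3 => ψ (‖y‖^2))) x
      = (T x).comp ((2 • (innerSL ℝ x)).smulRight (d2ψ (‖x‖^2))) + T.flip (dψ (‖x‖^2)) :=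
    hDev.fderiv_eq.trans hDdev.fderiv
  unfold lap
  simp only [iteratedFDeriv_two_apply, hsecond]
  simp only [ContinuousLinearMap.add_apply, ContinuousLinearMap.comp_apply,
    ContinuousLinearMap.flip_apply, ContinuousLinearMap.smulRight_apply,
    ContinuousLinearMap.smul_apply, hT, Matrix.cons_val_zero, Matrix.cons_val_one,
    Matrix.head_cons]
  have hsmul : ∀ (c : R3 →L[ℝ] ℝ) (f : ℂ) (v : R3),
      (ContinuousLinearMap.smulRightL ℝ R3 ℂ) c f v = c v • f := fun _ _ _ => rfl
  simp only [hsmul, ContinuousLinearMap.smul_apply, innerSL_apply_apply,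
    EuclideanSpace.inner_single_right, EuclideanSpace.inner_single_left,
    RCLike.inner_apply, conj_trivial, one_mul, mul_one, smul_eq_mul]
  have hxsum : (x 0)^2 + (x 1)^2 + (x 2)^2 = ‖x‖^2 := by
    rw [EuclideanSpace.norm_eq, Real.sq_sqrt (by positivity), Fin.sum_univ_three]
    simp [Real.norm_eq_abs, sq_abs]
  rw [Fin.sum_univ_three, ← hxsum]
  simp only [EuclideanSpace.single_apply, if_pos rfl, nsmul_eq_mul, Nat.cast_ofNat,
    Complex.real_smul, smul_eq_mul]
  push_cast
  ring


def S (t : ℝ) : ℂ := (Real.sqrt t : ℂ)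
def EE (μ : ℂ) (t : ℝ) : ℂ := Complex.exp (μ * S t) / S t
def EE1 (μ : ℂ) (t : ℝ) : ℂ := Complex.exp (μ * S t) * (μ * S t - 1) / (2 * (S t)^3)
def EE2 (μ : ℂ) (t : ℝ) : ℂ :=
  Complex.exp (μ * S t) * (μ^2 * (S t)^2 - 3*μ*(S t) + 3) / (4 * (S t)^5)

lemma hasDerivAt_S {t : ℝ} (ht : 0 < t) :
    HasDerivAt S ((1/(2*Real.sqrt t) : ℝ) : ℂ) t :=
  (Real.hasDerivAt_sqrt ht.ne').ofReal_comp

lemma S_ne {t : ℝ} (ht : 0 < t) : S t ≠ 0 := by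
  simp [S, Complex.ofReal_ne_zero, Real.sqrt_ne_zero', ht]

lemma hasDerivAt_EE (μ : ℂ) {t : ℝ} (ht : 0 < t) :
    HasDerivAt (EE μ) (EE1 μ t) t := by
  have hs := S_ne ht
  have hS := hasDerivAt_S ht
  have hnum : HasDerivAt (fun u => Complex.exp (μ * S u))
      (Complex.exp (μ * S t) * (μ * ((1/(2*Real.sqrt t) : ℝ) : ℂ))) t := by
    simpa [mul_comm] using ((hS.const_mul μ).cexp)
  have h := hnum.div hS hs
  refine h.congr_deriv ?_
  have hcast : ((1/(2*Real.sqrt t) : ℝ) : ℂ) = 1 / (2 * S t) := by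
    push_cast [S]; ring
  rw [hcast, EE1]
  have h2 : (2 : ℂ) * S t ≠ 0 := by simp [hs]
  field_simp

lemma hasDerivAt_EE1 (μ : ℂ) {t : ℝ} (ht : 0 < t) :
    HasDerivAt (EE1 μ) (EE2 μ t) t := by
  have hs := S_ne ht
  have hS := hasDerivAt_S ht
  have hcast : ((1/(2*Real.sqrt t) : ℝ) : ℂ) = 1 / (2 * S t) := by
    push_cast [S]; ring
  have hexp : HasDerivAt (fun u => Complex.exp (μ * S u))
      (Complex.exp (μ * S t) * (μ * (1 / (2 * S t)))) t := by
    rw [← hcast]; simpa [mul_comm] using ((hS.const_mul μ).cexp)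
  have hlin : HasDerivAt (fun u => μ * S u - 1) (μ * (1 / (2 * S t))) t := by
    rw [← hcast]; exact ((hS.const_mul μ).sub_const 1)
  have hnum : HasDerivAt (fun u => Complex.exp (μ * S u) * (μ * S u - 1))
      (Complex.exp (μ * S t) * (μ * (1 / (2 * S t))) * (μ * S t - 1)
        + Complex.exp (μ * S t) * (μ * (1 / (2 * S t)))) t := hexp.mul hlin
  have h3 : HasDerivAt (fun u => (S u)^3) (3 * (S t)^2 * (1/(2 * S t))) t := by
    have h := hS.mul (hS.mul hS)
    have heq : (fun u => S u * (S u * S u)) = fun u => (S u)^3 := by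
      funext u; ring
    change HasDerivAt (fun u => S u * (S u * S u)) _ t at h
    rw [heq] at h
    convert h using 1
    rw [hcast, Pi.mul_apply]; ring
  have hden := h3.const_mul 2
  have hdenne : (2 : ℂ) * (S t)^3 ≠ 0 := by simp [hs]
  have h := hnum.div hden hdenne
  refine h.congr_deriv ?_
  rw [EE2]
  field_simp
  ring

lemma key_identity (μ : ℂ) {t : ℝ} (ht : 0 < t) :
    6 * EE1 μ t + 4 * (t : ℂ) * EE2 μ t = μ^2 * EE μ t := by
  have hs := S_ne ht
  have hts : (t : ℂ) = (S t)^2 := by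
    rw [S, ← Complex.ofReal_pow, Real.sq_sqrt ht.le]
  rw [EE1, EE2, EE, hts]
  field_simp
  ring


lemma mu1_pow : ∀ κ : ℝ, (Complex.I * κ)^4 = (κ:ℂ)^4 := by
  intro κ
  rw [mul_pow]
  norm_num [pow_succ, Complex.I_mul_I]

/-- For `κ > 0`, the fundamental solution
`G_κ(x) = (e^{iκ|x|} − e^{−κ|x|})/(8πκ²|x|)` of the biharmonic operator is smooth on
`ℝ³ \ {0}` and satisfies `Δ(ΔG_κ) = κ⁴ G_κ` there. -/
theorem stmt_5 (κ : ℝ) (hκ : 0 < κ) (G : R3 → ℂ)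
    (hG : ∀ x : R3,
      G x = (Complex.exp (Complex.I * κ * ‖x‖) - Complex.exp (-((κ * ‖x‖ : ℝ) : ℂ))) /
        (8 * (Real.pi : ℂ) * (κ : ℂ) ^ 2 * (‖x‖ : ℂ))) :
    ContDiffOn ℝ (⊤ : ℕ∞) G {x : R3 | x ≠ 0} ∧
      ∀ x : R3, x ≠ 0 → lap (lap G) x = (κ : ℂ) ^ 4 * G x := by
  set μ₁ : ℂ := Complex.I * κ with hμ₁
  set μ₂ : ℂ := (-κ : ℂ) with hμ₂
  set c : ℂ := (8 * (Real.pi : ℂ) * (κ:ℂ)^2)⁻¹ with hc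
  set ψ : ℝ → ℂ := fun t => c * (EE μ₁ t - EE μ₂ t) with hψ
  set dψ : ℝ → ℂ := fun t => c * (EE1 μ₁ t - EE1 μ₂ t) with hdψ
  set d2ψ : ℝ → ℂ := fun t => c * (EE2 μ₁ t - EE2 μ₂ t) with hd2ψ
  set χ : ℝ → ℂ := fun t => c * (μ₁^2 * EE μ₁ t - μ₂^2 * EE μ₂ t) with hχ
  set dχ : ℝ → ℂ := fun t => c * (μ₁^2 * EE1 μ₁ t - μ₂^2 * EE1 μ₂ t) with hdχ
  set d2χ : ℝ → ℂ := fun t => c * (μ₁^2 * EE2 μ₁ t - μ₂^2 * EE2 μ₂ t) with hd2χ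
  have hs1 : ∀ t, 0 < t → HasDerivAt ψ (dψ t) t := fun t ht =>
    ((hasDerivAt_EE μ₁ ht).sub (hasDerivAt_EE μ₂ ht)).const_mul c
  have hs2 : ∀ t, 0 < t → HasDerivAt dψ (d2ψ t) t := fun t ht =>
    ((hasDerivAt_EE1 μ₁ ht).sub (hasDerivAt_EE1 μ₂ ht)).const_mul c
  have hs3 : ∀ t, 0 < t → HasDerivAt χ (dχ t) t := fun t ht =>
    (((hasDerivAt_EE μ₁ ht).const_mul (μ₁^2)).sub
      ((hasDerivAt_EE μ₂ ht).const_mul (μ₂^2))).const_mul c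
  have hs4 : ∀ t, 0 < t → HasDerivAt dχ (d2χ t) t := fun t ht =>
    (((hasDerivAt_EE1 μ₁ ht).const_mul (μ₁^2)).sub
      ((hasDerivAt_EE1 μ₂ ht).const_mul (μ₂^2))).const_mul c
  -- G is the radial function ψ(‖x‖²)
  have hGeq : G = fun y : R3 => ψ (‖y‖^2) := by
    funext y
    rw [hG y, hψ]
    simp only [EE, S, Real.sqrt_sq (norm_nonneg y)]
    rw [hμ₁, hμ₂, hc]
    push_cast
    simp only [div_eq_mul_inv, mul_inv]
    ring
  constructor
  · -- smoothness
    have hEEc : ∀ (μ : ℂ) (t : ℝ), 0 < t → ContDiffAt ℝ (⊤ : ℕ∞) (EE μ) t := by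
      intro μ t ht
      have hS : ContDiffAt ℝ (⊤ : ℕ∞) S t :=
        Complex.ofRealCLM.contDiff.contDiffAt.comp t (Real.contDiffAt_sqrt ht.ne')
      have hmul : ContDiffAt ℝ (⊤ : ℕ∞) (fun u => μ * S u) t := contDiffAt_const.mul hS
      have hexp : ContDiffAt ℝ (⊤ : ℕ∞) (fun u => Complex.exp (μ * S u)) t := hmul.cexp
      have hinv : ContDiffAt ℝ (⊤ : ℕ∞) (fun u => (S u)⁻¹) t := hS.inv (S_ne ht)
      have hfin : ContDiffAt ℝ (⊤ : ℕ∞) (fun u => Complex.exp (μ * S u) * (S u)⁻¹) t :=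
        hexp.mul hinv
      rw [show EE μ = fun u => Complex.exp (μ * S u) * (S u)⁻¹ from
        funext fun u => by simp only [EE, div_eq_mul_inv]]
      exact hfin
    intro x hx
    have hxne : x ≠ 0 := hx
    have hpos : (0:ℝ) < ‖x‖^2 := by
      have := norm_pos_iff.mpr hxne; positivity
    have hψc : ContDiffAt ℝ (⊤ : ℕ∞) ψ (‖x‖^2) :=
      contDiffAt_const.mul ((hEEc μ₁ _ hpos).sub (hEEc μ₂ _ hpos))
    rw [hGeq]
    exact (hψc.comp x (contDiff_norm_sq ℝ).contDiffAt).contDiffWithinAt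
  · -- the PDE
    intro x hx
    have hpos : (0:ℝ) < ‖x‖^2 := by
      have := norm_pos_iff.mpr hx; positivity
    have hlapG : ∀ y : R3, y ≠ 0 → lap G y = χ (‖y‖^2) := by
      intro y hy
      have hposy : (0:ℝ) < ‖y‖^2 := by
        have := norm_pos_iff.mpr hy; positivity
      rw [hGeq, lap_radial ψ dψ d2ψ hs1 hs2 hy]
      simp only [hdψ, hd2ψ, hχ]
      rw [← key_identity μ₁ hposy, ← key_identity μ₂ hposy]
      ring
    have hcongr : lap G =ᶠ[𝓝 x] fun y : R3 => χ (‖y‖^2) := by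
      filter_upwards [isOpen_compl_singleton.mem_nhds (by simpa using hx)] with y hy
      exact hlapG y hy
    have h2 : lap (lap G) x = lap (fun y : R3 => χ (‖y‖^2)) x := lap_congr hcongr
    rw [h2, lap_radial χ dχ d2χ hs3 hs4 hx]
    simp only [hdχ, hd2χ]
    have e1 := key_identity μ₁ hpos
    have e2 := key_identity μ₂ hpos
    have hμ14 : μ₁^4 = (κ:ℂ)^4 := mu1_pow κ
    have hμ24 : μ₂^4 = (κ:ℂ)^4 := by rw [hμ₂]; ring
    rw [hGeq]
    have expand : 6 * (c * (μ₁ ^ 2 * EE1 μ₁ (‖x‖^2) - μ₂ ^ 2 * EE1 μ₂ (‖x‖^2)))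
        + 4 * ((‖x‖^2 : ℝ) : ℂ) * (c * (μ₁ ^ 2 * EE2 μ₁ (‖x‖^2) - μ₂ ^ 2 * EE2 μ₂ (‖x‖^2)))
        = c * (μ₁^2 * (6 * EE1 μ₁ (‖x‖^2) + 4 * ((‖x‖^2 : ℝ) : ℂ) * EE2 μ₁ (‖x‖^2))
            - μ₂^2 * (6 * EE1 μ₂ (‖x‖^2) + 4 * ((‖x‖^2 : ℝ) : ℂ) * EE2 μ₂ (‖x‖^2))) := by ring
    rw [expand, e1, e2]
    simp only [hψ]
    have : μ₁^2 * (μ₁^2 * EE μ₁ (‖x‖^2)) - μ₂^2 * (μ₂^2 * EE μ₂ (‖x‖^2))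
        = μ₁^4 * EE μ₁ (‖x‖^2) - μ₂^4 * EE μ₂ (‖x‖^2) := by ring
    rw [this, hμ14, hμ24]
    ring
end
end

section
/- Let Ω ⊂ ℝ³ be compact with positive Lebesgue measure. Let ρ₁, f₁, g₁, a, b, c : ℝ³ → ℝ be bounded measurable functions such that ρ₁ − 1, f₁, g₁, a, b, c all vanish outside Ω, with a ≥ 0, b ≥ 0, c ≥ 0 almost everywhere, ρ₁ > 0 almost everywhere on Ω, and f₁ > 0, g₁ > 0 almost everywhere on Ω. Set ρ₂ := ρ₁ + a, f₂ := f₁ + b, g₂ := g₁ + c. If ∫_{ℝ³}(ρ₁f₁ − ρ₂f₂)(x) dx = 0 and ∫_{ℝ³}(ρ₁g₁ − ρ₂g₂)(x) dx = 0, then a = 0, b = 0 and c = 0 almost everywhere. -/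
noncomputable section
open MeasureTheory

/-- Key auxiliary lemma: one pair `(f₁, b)`. -/
lemma key_aux (Ω : Set R3) (hΩc : IsCompact Ω)
    (ρ₁ f₁ a b : R3 → ℝ)
    (hρ₁m : Measurable ρ₁) (hf₁m : Measurable f₁)
    (ham : Measurable a) (hbm : Measurable b)
    (C : ℝ) (hC : ∀ x, |ρ₁ x| ≤ C ∧ |f₁ x| ≤ C ∧ |a x| ≤ C ∧ |b x| ≤ C)
    (hsupp : ∀ x ∉ Ω, f₁ x = 0 ∧ a x = 0 ∧ b x = 0)
    (ha : ∀ᵐ x : R3 ∂volume, 0 ≤ a x) (hb : ∀ᵐ x : R3 ∂volume, 0 ≤ b x)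
    (hρ₁pos : ∀ᵐ x : R3 ∂volume, x ∈ Ω → 0 < ρ₁ x)
    (hf₁pos : ∀ᵐ x : R3 ∂volume, x ∈ Ω → 0 < f₁ x)
    (hint : (∫ x : R3, ρ₁ x * f₁ x - (ρ₁ x + a x) * (f₁ x + b x)) = 0) :
    (∀ᵐ x : R3 ∂volume, a x = 0) ∧ (∀ᵐ x : R3 ∂volume, b x = 0) := by
  set φ : R3 → ℝ := fun x => ρ₁ x * b x + a x * f₁ x + a x * b x with hφ
  have hφm : Measurable φ := by
    exact ((hρ₁m.mul hbm).add (ham.mul hf₁m)).add (ham.mul hbm)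
  have hφ0 : ∀ x ∉ Ω, φ x = 0 := by
    intro x hx
    obtain ⟨h1, h2, h3⟩ := hsupp x hx
    simp [hφ, h1, h2, h3]
  have hφnn : ∀ᵐ x : R3 ∂volume, 0 ≤ φ x := by
    filter_upwards [ha, hb, hρ₁pos, hf₁pos] with x hax hbx hρx hfx
    by_cases hx : x ∈ Ω
    · have := hρx hx; have := hfx hx
      have : 0 ≤ ρ₁ x * b x := mul_nonneg (le_of_lt (hρx hx)) hbx
      have : 0 ≤ a x * f₁ x := mul_nonneg hax (le_of_lt (hfx hx))
      positivity
    · rw [hφ0 x hx]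
  -- integrability
  have hφind : φ = Ω.indicator φ := by
    funext x
    by_cases hx : x ∈ Ω
    · rw [Set.indicator_of_mem hx]
    · rw [Set.indicator_of_notMem hx, hφ0 x hx]
  have hΩfin : volume Ω < ⊤ := hΩc.measure_lt_top
  have hφint : Integrable φ volume := by
    rw [hφind]
    apply (Measure.integrableOn_of_bounded (M := C * C + C * C + C * C) hΩfin.ne
      hφm.aestronglyMeasurable ?_).integrable_indicator hΩc.measurableSet
    · filter_upwards with x
      have h := hC x
      calc ‖φ x‖ ≤ ‖ρ₁ x * b x‖ + ‖a x * f₁ x‖ + ‖a x * b x‖ := by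
            simpa [hφ] using (norm_add_le (ρ₁ x * b x + a x * f₁ x) (a x * b x)).trans
              (add_le_add_left (norm_add_le _ _) _)
        _ ≤ C * C + C * C + C * C := by
            simp only [norm_mul, Real.norm_eq_abs]
            have h0 : (0:ℝ) ≤ C := le_trans (abs_nonneg _) h.1
            gcongr <;> tauto
  -- the integral of φ is zero
  have hφzero : ∫ x : R3, φ x = 0 := by
    have : ∀ x, ρ₁ x * f₁ x - (ρ₁ x + a x) * (f₁ x + b x) = -(φ x) := by
      intro x; simp only [hφ]; ring
    calc ∫ x : R3, φ x = -∫ x : R3, ρ₁ x * f₁ x - (ρ₁ x + a x) * (f₁ x + b x) := by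
          rw [← integral_neg]; congr 1; funext x; rw [this x, neg_neg]
      _ = 0 := by rw [hint, neg_zero]
  have hφae : ∀ᵐ x : R3 ∂volume, φ x = 0 := by
    have := (integral_eq_zero_iff_of_nonneg_ae hφnn hφint).mp hφzero
    filter_upwards [this] with x hx
    simpa using hx
  constructor
  · filter_upwards [hφae, ha, hb, hρ₁pos, hf₁pos] with x hx hax hbx hρx hfx
    by_cases hxΩ : x ∈ Ω
    · -- each term nonneg, sum zero ⟹ a x * f₁ x = 0, and f₁ x > 0
      have h1 : 0 ≤ ρ₁ x * b x := mul_nonneg (le_of_lt (hρx hxΩ)) hbx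
      have h2 : 0 ≤ a x * f₁ x := mul_nonneg hax (le_of_lt (hfx hxΩ))
      have h3 : 0 ≤ a x * b x := mul_nonneg hax hbx
      have haf : a x * f₁ x = 0 := by
        simp only [hφ] at hx; nlinarith
      rcases mul_eq_zero.mp haf with h | h
      · exact h
      · exact absurd h (ne_of_gt (hfx hxΩ))
    · exact (hsupp x hxΩ).2.1
  · filter_upwards [hφae, ha, hb, hρ₁pos, hf₁pos] with x hx hax hbx hρx hfx
    by_cases hxΩ : x ∈ Ω
    · have h1 : 0 ≤ ρ₁ x * b x := mul_nonneg (le_of_lt (hρx hxΩ)) hbx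
      have h2 : 0 ≤ a x * f₁ x := mul_nonneg hax (le_of_lt (hfx hxΩ))
      have h3 : 0 ≤ a x * b x := mul_nonneg hax hbx
      have hρb : ρ₁ x * b x = 0 := by
        simp only [hφ] at hx; nlinarith
      rcases mul_eq_zero.mp hρb with h | h
      · exact absurd h (ne_of_gt (hρx hxΩ))
      · exact h
    · exact (hsupp x hxΩ).2.2

/-- if `ρ₂ = ρ₁ + a`, `f₂ = f₁ + b`, `g₂ = g₁ + c` with `a, b, c ≥ 0` a.e.,
`ρ₁ > 0`, `f₁ > 0`, `g₁ > 0` a.e. on `Ω`, and `∫(ρ₁f₁ − ρ₂f₂) = 0`, `∫(ρ₁g₁ − ρ₂g₂) = 0`,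
then `a = b = c = 0` a.e. -/
theorem stmt_17 (Ω : Set R3) (hΩc : IsCompact Ω) (hΩpos : 0 < volume Ω)
    (ρ₁ f₁ g₁ a b c : R3 → ℝ)
    (hρ₁m : Measurable ρ₁) (hf₁m : Measurable f₁) (hg₁m : Measurable g₁)
    (ham : Measurable a) (hbm : Measurable b) (hcm : Measurable c)
    (hbdd : ∃ C, ∀ x, |ρ₁ x| ≤ C ∧ |f₁ x| ≤ C ∧ |g₁ x| ≤ C ∧ |a x| ≤ C ∧ |b x| ≤ C ∧ |c x| ≤ C)
    (hsupp : ∀ x ∉ Ω, ρ₁ x = 1 ∧ f₁ x = 0 ∧ g₁ x = 0 ∧ a x = 0 ∧ b x = 0 ∧ c x = 0)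
    (ha : ∀ᵐ x : R3 ∂volume, 0 ≤ a x) (hb : ∀ᵐ x : R3 ∂volume, 0 ≤ b x)
    (hc : ∀ᵐ x : R3 ∂volume, 0 ≤ c x)
    (hρ₁pos : ∀ᵐ x : R3 ∂volume, x ∈ Ω → 0 < ρ₁ x)
    (hf₁pos : ∀ᵐ x : R3 ∂volume, x ∈ Ω → 0 < f₁ x)
    (hg₁pos : ∀ᵐ x : R3 ∂volume, x ∈ Ω → 0 < g₁ x)
    (ρ₂ f₂ g₂ : R3 → ℝ)
    (hρ₂ : ∀ x, ρ₂ x = ρ₁ x + a x) (hf₂ : ∀ x, f₂ x = f₁ x + b x)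
    (hg₂ : ∀ x, g₂ x = g₁ x + c x)
    (hfint : (∫ x : R3, ρ₁ x * f₁ x - ρ₂ x * f₂ x) = 0)
    (hgint : (∫ x : R3, ρ₁ x * g₁ x - ρ₂ x * g₂ x) = 0) :
    (∀ᵐ x : R3 ∂volume, a x = 0) ∧ (∀ᵐ x : R3 ∂volume, b x = 0) ∧
      (∀ᵐ x : R3 ∂volume, c x = 0) := by
  obtain ⟨C, hC⟩ := hbdd
  have hfint' : (∫ x : R3, ρ₁ x * f₁ x - (ρ₁ x + a x) * (f₁ x + b x)) = 0 := by
    rw [← hfint]; congr 1; funext x; rw [hρ₂ x, hf₂ x]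
  have hgint' : (∫ x : R3, ρ₁ x * g₁ x - (ρ₁ x + a x) * (g₁ x + c x)) = 0 := by
    rw [← hgint]; congr 1; funext x; rw [hρ₂ x, hg₂ x]
  have h1 := key_aux Ω hΩc ρ₁ f₁ a b hρ₁m hf₁m ham hbm C
    (fun x => ⟨(hC x).1, (hC x).2.1, (hC x).2.2.2.1, (hC x).2.2.2.2.1⟩)
    (fun x hx => ⟨(hsupp x hx).2.1, (hsupp x hx).2.2.2.1, (hsupp x hx).2.2.2.2.1⟩)
    ha hb hρ₁pos hf₁pos hfint'
  have h2 := key_aux Ω hΩc ρ₁ g₁ a c hρ₁m hg₁m ham hcm C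
    (fun x => ⟨(hC x).1, (hC x).2.2.1, (hC x).2.2.2.1, (hC x).2.2.2.2.2⟩)
    (fun x hx => ⟨(hsupp x hx).2.2.1, (hsupp x hx).2.2.2.1, (hsupp x hx).2.2.2.2.2⟩)
    ha hc hρ₁pos hg₁pos hgint'
  exact ⟨h1.1, h1.2, h2.2⟩
end
end
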